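/- arXiv:math/0012048 — 2 statements merged into one kernel-verified Lean document; each statement's English description precedes it below -/
import Mathlib

section
/- Let V be a real vector space with a symmetric bilinear form of signature (1,n), and let FP be a connected component of the positive cone. If A ∈ FP and B is a nonzero element of the closure of FP, then A·B > 0. -/
noncomputable def mform (n : ℕ) (x y : Fin (n+1) → ℝ) : ℝ :=
  x 0 * y 0 - ∑ i : Fin n, x i.succ * y i.succ

/-! Writing `y = (y₀, ȳ)`, the form is `x₀ y₀ - ⟪x̄, ȳ⟫`, so the positive cone is the disjoint
union of the open convex cones `‖ȳ‖ < y₀` and `‖ȳ‖ < -y₀`, which are therefore its two components;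
negation exchanges them. On the closure of the future cone `‖ȳ‖ ≤ y₀`, and `y₀ > 0` unless `y = 0`,
so Cauchy–Schwarz gives `⟪x̄, ȳ⟫ ≤ ‖x̄‖ ‖ȳ‖ < x₀ y₀` for `x` in the future cone. -/

open Set

lemma connectedComponentIn_union_eq_left {X : Type*} [TopologicalSpace X]
    {U W : Set X} {x : X} (hUc : IsPreconnected U) (hU : IsOpen U) (hW : IsOpen W)
    (hUW : Disjoint U W) (hx : x ∈ U) :
    connectedComponentIn (U ∪ W) x = U :=
  subset_antisymm
    (isPreconnected_connectedComponentIn.subset_left_of_subset_union hU hW hUW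
      (connectedComponentIn_subset _ _) ⟨x, mem_connectedComponentIn (Or.inl hx), hx⟩)
    (hUc.subset_connectedComponentIn hx subset_union_left)

noncomputable def spatial (n : ℕ) : (Fin (n+1) → ℝ) →L[ℝ] EuclideanSpace ℝ (Fin n) :=
  (EuclideanSpace.equiv (Fin n) ℝ).symm.toContinuousLinearMap ∘L
    ContinuousLinearMap.pi fun i => ContinuousLinearMap.proj i.succ

@[simp]
lemma spatial_apply (n : ℕ) (y : Fin (n+1) → ℝ) (i : Fin n) : spatial n y i = y i.succ := rfl

lemma eq_zero_of_spatial_eq_zero {n : ℕ} {y : Fin (n+1) → ℝ} (h0 : y 0 = 0)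
    (h : spatial n y = 0) : y = 0 :=
  funext fun i => Fin.cases h0 (fun j => congrArg (· j) h) i

lemma mform_eq_sub_inner (n : ℕ) (x y : Fin (n+1) → ℝ) :
    mform n x y = x 0 * y 0 - inner ℝ (spatial n x) (spatial n y) := by
  simp [mform, PiLp.inner_apply, mul_comm]

lemma mform_self (n : ℕ) (y : Fin (n+1) → ℝ) :
    mform n y y = y 0 ^ 2 - ‖spatial n y‖ ^ 2 := by
  rw [mform_eq_sub_inner, real_inner_self_eq_norm_sq, sq (y 0)]

@[simp]
lemma mform_neg_neg (n : ℕ) (x y : Fin (n+1) → ℝ) : mform n (-x) (-y) = mform n x y := by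
  simp [mform]

def futureCone (n : ℕ) : Set (Fin (n+1) → ℝ) := {y | ‖spatial n y‖ < y 0}

lemma isOpen_futureCone (n : ℕ) : IsOpen (futureCone n) :=
  isOpen_lt (spatial n).continuous.norm (continuous_apply 0)

lemma convex_futureCone (n : ℕ) : Convex ℝ (futureCone n) := by
  have h : ConvexOn ℝ univ (fun y => ‖spatial n y‖ - y 0) :=
    ((convexOn_norm convex_univ).comp_linearMap (spatial n).toLinearMap).sub
      ((LinearMap.proj 0).concaveOn convex_univ)
  simpa [futureCone] using h.convex_lt 0

lemma closure_futureCone_subset (n : ℕ) :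
    closure (futureCone n) ⊆ {y | ‖spatial n y‖ ≤ y 0} :=
  closure_lt_subset_le (spatial n).continuous.norm (continuous_apply 0)

lemma disjoint_futureCone_neg (n : ℕ) : Disjoint (futureCone n) (-futureCone n) := by
  refine disjoint_left.2 fun y hy hy' => ?_
  simp only [futureCone, mem_neg, mem_ofPred_eq, map_neg, norm_neg, Pi.neg_apply] at hy hy'
  linarith [norm_nonneg (spatial n y)]

lemma setOf_mform_self_pos (n : ℕ) :
    {y | 0 < mform n y y} = futureCone n ∪ -futureCone n := by
  ext y
  simp only [futureCone, mem_ofPred_eq, mem_union, mem_neg, map_neg, norm_neg, Pi.neg_apply,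
    mform_self, sub_pos, ← lt_abs]
  rw [sq_lt_sq, abs_norm]

lemma apply_zero_pos_of_mem_closure_futureCone {n : ℕ} {y : Fin (n+1) → ℝ}
    (hy : y ∈ closure (futureCone n)) (hy0 : y ≠ 0) : 0 < y 0 := by
  have hle : ‖spatial n y‖ ≤ y 0 := closure_futureCone_subset n hy
  by_contra! hneg
  have hs : ‖spatial n y‖ = 0 := le_antisymm (hle.trans hneg) (norm_nonneg _)
  exact hy0 (eq_zero_of_spatial_eq_zero (by linarith) (norm_eq_zero.1 hs))

lemma mform_pos_of_mem_futureCone_of_mem_closure {n : ℕ} {x y : Fin (n+1) → ℝ}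
    (hx : x ∈ futureCone n) (hy : y ∈ closure (futureCone n)) (hy0 : y ≠ 0) : 0 < mform n x y := by
  have hy' : ‖spatial n y‖ ≤ y 0 := closure_futureCone_subset n hy
  have hy0' : 0 < y 0 := apply_zero_pos_of_mem_closure_futureCone hy hy0
  rw [mform_eq_sub_inner, sub_pos]
  calc inner ℝ (spatial n x) (spatial n y) ≤ ‖spatial n x‖ * ‖spatial n y‖ :=
        real_inner_le_norm _ _
    _ ≤ ‖spatial n x‖ * y 0 := by gcongr
    _ < x 0 * y 0 := mul_lt_mul_of_pos_right hx hy0'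

lemma connectedComponentIn_of_mem_futureCone {n : ℕ} {x : Fin (n+1) → ℝ}
    (hx : x ∈ futureCone n) : connectedComponentIn {y | 0 < mform n y y} x = futureCone n := by
  rw [setOf_mform_self_pos]
  exact connectedComponentIn_union_eq_left (convex_futureCone n).isPreconnected
    (isOpen_futureCone n) (isOpen_futureCone n).neg (disjoint_futureCone_neg n) hx

lemma connectedComponentIn_of_mem_neg_futureCone {n : ℕ} {x : Fin (n+1) → ℝ}
    (hx : x ∈ -futureCone n) : connectedComponentIn {y | 0 < mform n y y} x = -futureCone n := by
  rw [setOf_mform_self_pos, union_comm]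
  exact connectedComponentIn_union_eq_left (convex_futureCone n).neg.isPreconnected
    (isOpen_futureCone n).neg (isOpen_futureCone n) (disjoint_futureCone_neg n).symm hx

/-- Strengthened Light Cone Lemma: if A lies in a component FP of the positive
cone and B is a nonzero element of the closure of FP, then A·B > 0. -/
theorem stmt4 (n : ℕ) (FP : Set (Fin (n+1) → ℝ)) (x₀ : Fin (n+1) → ℝ)
    (hx₀ : 0 < mform n x₀ x₀)
    (hFP : FP = connectedComponentIn {y | 0 < mform n y y} x₀)
    (A B : Fin (n+1) → ℝ)
    (hA : A ∈ FP) (hB : B ∈ closure FP) (hB0 : B ≠ 0) :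
    0 < mform n A B := by
  subst hFP
  rcases (setOf_mform_self_pos n ▸ hx₀ : x₀ ∈ futureCone n ∪ -futureCone n) with hx | hx
  · rw [connectedComponentIn_of_mem_futureCone hx] at hA hB
    exact mform_pos_of_mem_futureCone_of_mem_closure hA hB hB0
  · rw [connectedComponentIn_of_mem_neg_futureCone hx] at hA hB
    rw [← neg_closure] at hB
    simpa using mform_pos_of_mem_futureCone_of_mem_closure hA hB (neg_ne_zero.2 hB0)
end

section
/- Let V be a real vector space with symmetric bilinear form of signature (1,n), K ∈ V with K·K ≥ 0, K not zero, and let FP be the component of the positive cone containing K (or whose closure contains K). Suppose ω ∈ FP, e ∈ V satisfies e·e = e·K = 0 and K·K = 0. Then e = rK for some real number r. Moreover, if additionally (K - e)·ω ≥ 0 then r ≤ 1, and if (-K + 2e)·ω ≥ 0 then r ≥ 1/2. -/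
lemma mform_smul_left (n : ℕ) (s : ℝ) (x y : Fin (n+1) → ℝ) :
    mform n (s • x) y = s * mform n x y := by
  simp [mform, Finset.mul_sum, mul_sub, mul_assoc]

lemma mform_sub_left (n : ℕ) (x y z : Fin (n+1) → ℝ) :
    mform n (x - y) z = mform n x z - mform n y z := by
  simp [mform, sub_mul, Finset.sum_sub_distrib]
  ring

/-- Key step in Lemma 3.2: if K ≠ 0 is null and lies in the closure of the
forward cone FP, ω ∈ FP, and e is null and orthogonal to K, then e = rK, with
r ≤ 1 if (K-e)·ω ≥ 0 and r ≥ 1/2 if (-K+2e)·ω ≥ 0. -/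
theorem stmt9 (n : ℕ) (FP : Set (Fin (n+1) → ℝ)) (x₀ : Fin (n+1) → ℝ)
    (hx₀ : 0 < mform n x₀ x₀)
    (hFP : FP = connectedComponentIn {y | 0 < mform n y y} x₀)
    (K ω e : Fin (n+1) → ℝ)
    (hK0 : K ≠ 0) (hKK : mform n K K = 0) (hKcl : K ∈ closure FP)
    (hω : ω ∈ FP)
    (hee : mform n e e = 0) (heK : mform n e K = 0) :
    ∃ r : ℝ, e = r • K ∧
      (0 ≤ mform n (K - e) ω → r ≤ 1) ∧
      (0 ≤ mform n ((2 : ℝ) • e - K) ω → 1 / 2 ≤ r) := by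
  have hsubS : FP ⊆ {y | 0 < mform n y y} := by
    rw [hFP]; exact connectedComponentIn_subset _ _
  have hx₀S : x₀ ∈ {y | 0 < mform n y y} := hx₀
  have hconn : IsConnected FP := by
    rw [hFP]; exact (isConnected_connectedComponentIn_iff).mpr hx₀S
  -- every y in the positive set has nonzero 0-th coordinate
  have hne : ∀ y ∈ {y : Fin (n+1) → ℝ | 0 < mform n y y}, y 0 ≠ 0 := by
    intro y hy hy0
    have hnn : 0 ≤ ∑ i : Fin n, y i.succ * y i.succ :=
      Finset.sum_nonneg fun i _ => mul_self_nonneg _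
    simp only [Set.mem_setOf_eq, mform, hy0] at hy
    linarith
  have hx₀0 : x₀ 0 ≠ 0 := hne x₀ hx₀S
  -- sign constancy on FP
  have key : ∀ y ∈ FP, 0 < y 0 * x₀ 0 := by
    intro y hy
    by_contra h
    push_neg at h
    have hcont : Continuous fun z : Fin (n+1) → ℝ => z 0 * x₀ 0 :=
      (continuous_apply 0).mul continuous_const
    have himg : IsPreconnected ((fun z : Fin (n+1) → ℝ => z 0 * x₀ 0) '' FP) :=
      hconn.isPreconnected.image _ hcont.continuousOn
    have hoc := himg.ordConnected
    have hx₀FP : x₀ ∈ FP := by rw [hFP]; exact mem_connectedComponentIn hx₀S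
    have h0mem : (0 : ℝ) ∈ (fun z : Fin (n+1) → ℝ => z 0 * x₀ 0) '' FP := by
      apply hoc.out (Set.mem_image_of_mem _ hy) (Set.mem_image_of_mem _ hx₀FP)
      constructor
      · exact h
      · exact mul_self_nonneg _
    obtain ⟨z, hzFP, hz0⟩ := h0mem
    have : z 0 = 0 := by
      rcases mul_eq_zero.mp hz0 with h' | h'
      · exact h'
      · exact absurd h' hx₀0
    exact hne z (hsubS hzFP) this
  -- nonnegativity on closure
  have keycl : ∀ y ∈ closure FP, 0 ≤ y 0 * x₀ 0 := by
    intro y hy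
    have hclosed : IsClosed {y : Fin (n+1) → ℝ | 0 ≤ y 0 * x₀ 0} :=
      isClosed_le continuous_const ((continuous_apply 0).mul continuous_const)
    exact closure_minimal (fun z hz => le_of_lt (key z hz)) hclosed hy
  -- K's 0-th coordinate is nonzero
  have hKsum : K 0 * K 0 = ∑ i : Fin n, K i.succ * K i.succ := by
    simp only [mform] at hKK; linarith
  have hKne : K 0 ≠ 0 := by
    intro h0
    apply hK0
    have hz : ∀ i : Fin n, K i.succ = 0 := by
      have hsum : ∑ i : Fin n, K i.succ * K i.succ = 0 := by rw [← hKsum, h0]; ring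
      intro i
      have := (Finset.sum_eq_zero_iff_of_nonneg
        (fun j _ => mul_self_nonneg (K j.succ))).mp hsum i (Finset.mem_univ i)
      exact mul_self_eq_zero.mp this
    funext i
    refine Fin.cases ?_ ?_ i
    · exact h0
    · exact hz
  -- signs
  have hKx₀ : 0 < K 0 * x₀ 0 :=
    lt_of_le_of_ne (keycl K hKcl) (Ne.symm (mul_ne_zero hKne hx₀0))
  have hωx₀ : 0 < ω 0 * x₀ 0 := key ω hω
  have hKω0 : 0 < K 0 * ω 0 := by
    nlinarith [mul_pos hKx₀ hωx₀, mul_self_nonneg (x₀ 0)]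
  -- e is a multiple of K
  have heesum : e 0 * e 0 = ∑ i : Fin n, e i.succ * e i.succ := by
    simp only [mform] at hee; linarith
  have heKsum : e 0 * K 0 = ∑ i : Fin n, e i.succ * K i.succ := by
    simp only [mform] at heK; linarith
  have hzero : ∑ i : Fin n, (K 0 * e i.succ - e 0 * K i.succ)^2 = 0 := by
    have expand : ∑ i : Fin n, (K 0 * e i.succ - e 0 * K i.succ)^2
        = (K 0)^2 * (∑ i : Fin n, e i.succ * e i.succ)
          - 2 * (K 0) * (e 0) * (∑ i : Fin n, e i.succ * K i.succ)
          + (e 0)^2 * (∑ i : Fin n, K i.succ * K i.succ) := by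
      simp only [Finset.mul_sum, ← Finset.sum_sub_distrib, ← Finset.sum_add_distrib]
      exact Finset.sum_congr rfl fun i _ => by ring
    rw [expand, ← heesum, ← heKsum, ← hKsum]; ring
  have hprop : ∀ i : Fin n, K 0 * e i.succ = e 0 * K i.succ := by
    intro i
    have := (Finset.sum_eq_zero_iff_of_nonneg
      (fun j _ => sq_nonneg (K 0 * e j.succ - e 0 * K j.succ))).mp hzero i (Finset.mem_univ i)
    have := pow_eq_zero_iff (n := 2) (by norm_num) |>.mp this
    linarith
  set r : ℝ := e 0 / K 0 with hr
  have heq : e = r • K := by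
    funext i
    refine Fin.cases ?_ ?_ i
    · simp only [Pi.smul_apply, smul_eq_mul, hr]
      field_simp
    · intro j
      simp only [Pi.smul_apply, smul_eq_mul, hr]
      have := hprop j
      field_simp
      linarith
  -- K·ω > 0
  have hωsum : ∑ i : Fin n, ω i.succ * ω i.succ < ω 0 * ω 0 := by
    have := hsubS hω
    simp only [Set.mem_setOf_eq, mform] at this
    linarith
  have hCS := Finset.sum_mul_sq_le_sq_mul_sq Finset.univ
      (fun i : Fin n => K i.succ) (fun i : Fin n => ω i.succ)
  have hKωpos : 0 < mform n K ω := by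
    simp only [mform]
    have h1 : (∑ i : Fin n, K i.succ * ω i.succ)^2
        ≤ (∑ i : Fin n, K i.succ * K i.succ) * (∑ i : Fin n, ω i.succ * ω i.succ) := by
      calc (∑ i : Fin n, K i.succ * ω i.succ)^2
          ≤ (∑ i : Fin n, K i.succ ^ 2) * (∑ i : Fin n, ω i.succ ^ 2) := hCS
        _ = (∑ i : Fin n, K i.succ * K i.succ) * (∑ i : Fin n, ω i.succ * ω i.succ) := by
            simp [sq]
    have hK0pos : 0 < K 0 * K 0 := mul_self_pos.mpr hKne
    have h2 : (∑ i : Fin n, K i.succ * ω i.succ)^2 < (K 0 * ω 0)^2 := by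
      calc (∑ i : Fin n, K i.succ * ω i.succ)^2
          ≤ (K 0 * K 0) * (∑ i : Fin n, ω i.succ * ω i.succ) := by rw [hKsum]; exact h1
        _ < (K 0 * K 0) * (ω 0 * ω 0) := by
            exact mul_lt_mul_of_pos_left hωsum hK0pos
        _ = (K 0 * ω 0)^2 := by ring
    nlinarith [h2, hKω0]
  refine ⟨r, heq, ?_, ?_⟩
  · intro h
    rw [heq, show K - r • K = (1 - r) • K by module, mform_smul_left] at h
    nlinarith
  · intro h
    rw [heq] at h
    rw [show (2:ℝ) • r • K - K = (2*r - 1) • K by rw [smul_smul, ← one_smul ℝ K]; module] at h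
    rw [mform_smul_left] at h
    nlinarith
end
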